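/- For a round-robin sequence with two agents and positive utilities, if agent i picks at positions k and agent j's t-th picked item is denoted t_s, then for every s ≥ 2, agent i's (s−1)-th pick s_{s−1} satisfies s_{s−1} ≿_i t_s; consequently p(i) responsively dominates p(j) \ {t_1}. -/

import Mathlib

open Finset

/-- Sequential allocation: each agent on their turn picks a remaining item of maximal utility. -/
def seqValid19 {A O : Type*} [DecidableEq O] (u : A → O → ℝ) :
    List A → List O → Finset O → Prop
  | [], [], _ => True
  | a :: s, o :: ps, rem =>
      o ∈ rem ∧ (∀ o' ∈ rem, u a o' ≤ u a o) ∧ seqValid19 u s ps (rem.erase o)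
  | _, _, _ => False

/-- The list of items picked by agent `i`, in picking order. -/
def picksOf19 {A O : Type*} [DecidableEq A] (seq : List A) (picks : List O) (i : A) :
    List O :=
  (seq.zip picks).filterMap (fun x => if x.1 = i then some x.2 else none)

/-!
Under round robin with two agents, positions `c, c + 2, c + 4, …` of the picking order belong
to one agent and the others to the other agent, so `i`'s `(s-1)`-th pick is made at a position
`p = c + 2(s-1)` earlier than the position `q = d + 2s` of `j`'s `s`-th pick. When `i` picked at
`p`, the item picked at `q` was still available, so `i` weakly prefers its own pick. Sending each
pick of `j` other than the first to the pick of `i` one round earlier gives the responsive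
domination.
-/

namespace List

variable {α : Type*}

def everyOther : List α → List α
  | [] => []
  | [a] => [a]
  | a :: _ :: l => a :: everyOther l

theorem everyOther_cons (a : α) (l : List α) :
    everyOther (a :: l) = a :: everyOther (l.drop 1) := by
  cases l <;> rfl

theorem length_everyOther : ∀ l : List α, (everyOther l).length = (l.length + 1) / 2
  | [] | [_] => by simp [everyOther]
  | _ :: _ :: l => by
    simp only [everyOther, length_cons, length_everyOther l]
    omega

theorem getElem_everyOther : ∀ (l : List α) (m : ℕ) (hm : m < (everyOther l).length),
    (everyOther l)[m] = l[2 * m]'(by rw [length_everyOther] at hm; omega)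
  | [_], 0, _ => rfl
  | _ :: _ :: _, 0, _ => rfl
  | _ :: _ :: l, m + 1, hm => getElem_everyOther l m (by simpa [everyOther] using hm)

theorem exists_injOn_le_pick_of_le_getElem_pred [DecidableEq α] {β : Type*} [Preorder β]
    {v : α → β} {L M : List α} (hM : M.Nodup)
    (h : ∀ s, 1 ≤ s → ∀ hs : s < L.length,
      ∃ hs' : s - 1 < M.length, v L[s] ≤ v M[s - 1])
    {t₁ : α} (ht : L.head? = some t₁) :
    ∃ f : α → α, Set.InjOn f ↑(L.toFinset.erase t₁) ∧
      ∀ x ∈ L.toFinset.erase t₁, f x ∈ M.toFinset ∧ v x ≤ v (f x) := by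
  have key : ∀ x ∈ L.toFinset.erase t₁,
      1 ≤ L.idxOf x ∧ x ∈ L ∧
        ∃ hx : L.idxOf x - 1 < M.length, v x ≤ v M[L.idxOf x - 1] := by
    intro x hx
    obtain ⟨hxt, hxL⟩ := Finset.mem_erase.1 hx
    rw [mem_toFinset] at hxL
    have hpos : 1 ≤ L.idxOf x := by
      rw [Nat.one_le_iff_ne_zero, ne_eq, idxOf_eq_zero_iff_eq_nil_or_head_eq]
      rintro (rfl | hx0)
      · simp at ht
      · exact hxt (Option.some_injective _ (hx0.symm.trans ht))
    have hlt := idxOf_lt_length_iff.2 hxL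
    obtain ⟨hx', hle⟩ := h _ hpos hlt
    exact ⟨hpos, hxL, hx', by rwa [getElem_idxOf] at hle⟩
  refine ⟨fun x => M.getD (L.idxOf x - 1) x, fun x hx y hy hxy => ?_, fun x hx => ?_⟩
  · obtain ⟨hposx, hxL, hx', -⟩ := key x hx
    obtain ⟨hposy, -, hy', -⟩ := key y hy
    simp only [getD_eq_getElem _ _ hx', getD_eq_getElem _ _ hy', hM.getElem_inj_iff] at hxy
    exact (idxOf_inj hxL).1 (by omega)
  · obtain ⟨-, -, hx', hle⟩ := key x hx
    simp only [getD_eq_getElem _ _ hx']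
    exact ⟨mem_toFinset.2 (getElem_mem _), hle⟩

end List

open List

theorem picksOf19_cons_cons {A O : Type*} [DecidableEq A] (a : A) (s : List A) (o : O)
    (ps : List O) (i : A) :
    picksOf19 (a :: s) (o :: ps) i =
      if a = i then o :: picksOf19 s ps i else picksOf19 s ps i := by
  by_cases h : a = i <;> simp [picksOf19, h]

theorem picksOf19_sublist {A O : Type*} [DecidableEq A] :
    ∀ (seq : List A) (picks : List O) (i : A), (picksOf19 seq picks i).Sublist picks
  | [], _, _ => by simp [picksOf19]
  | _ :: _, [], _ => by simp [picksOf19]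
  | a :: s, o :: ps, i => by
    rw [picksOf19_cons_cons]
    split_ifs
    · exact (picksOf19_sublist s ps i).cons_cons o
    · exact (picksOf19_sublist s ps i).cons o

namespace seqValid19

variable {A O : Type*} [DecidableEq O] {u : A → O → ℝ}

theorem length_eq : ∀ {seq : List A} {picks : List O} {rem : Finset O},
    seqValid19 u seq picks rem → picks.length = seq.length
  | [], [], _, _ => rfl
  | _ :: _, _ :: _, _, h => congrArg (· + 1) (length_eq h.2.2)

theorem mem_of_mem_picks : ∀ {seq : List A} {picks : List O} {rem : Finset O},
    seqValid19 u seq picks rem → ∀ x ∈ picks, x ∈ rem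
  | [], [], _, _ => by simp
  | _ :: _, _ :: _, _, h => by
    rintro x (_ | ⟨_, hx⟩)
    · exact h.1
    · exact Finset.mem_of_mem_erase (mem_of_mem_picks h.2.2 x hx)

theorem nodup : ∀ {seq : List A} {picks : List O} {rem : Finset O},
    seqValid19 u seq picks rem → picks.Nodup
  | [], [], _, _ => List.nodup_nil
  | _ :: _, o :: _, _, h =>
    List.nodup_cons.2
      ⟨fun ho => Finset.ne_of_mem_erase (mem_of_mem_picks h.2.2 o ho) rfl, nodup h.2.2⟩

theorem le_pick_of_le : ∀ {seq : List A} {picks : List O} {rem : Finset O},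
    seqValid19 u seq picks rem → ∀ {p q : ℕ} (hp : p < seq.length) (hp' : p < picks.length)
      (hq : q < picks.length), p ≤ q → u seq[p] picks[q] ≤ u seq[p] picks[p]
  | [], [], _, _, _, _, hp, _, _, _ => absurd hp (Nat.not_lt_zero _)
  | _ :: _, _ :: _, _, _, 0, 0, _, _, _, _ => le_rfl
  | _ :: _, _ :: _, _, h, 0, _ + 1, _, _, _, _ =>
    h.2.1 _ (Finset.mem_of_mem_erase (mem_of_mem_picks h.2.2 _ (List.getElem_mem _)))
  | _ :: _, _ :: _, _, h, _ + 1, _ + 1, hp, hp', hq, hpq =>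
    le_pick_of_le h.2.2 (Nat.lt_of_succ_lt_succ hp) (Nat.lt_of_succ_lt_succ hp')
      (Nat.lt_of_succ_lt_succ hq) (Nat.le_of_succ_le_succ hpq)

end seqValid19

def IsRoundRobin (π : Equiv.Perm (Fin 2)) (seq : List (Fin 2)) : Prop :=
  ∀ k (hk : k < seq.length), seq[k] = π ⟨k % 2, Nat.mod_lt _ (by norm_num)⟩

namespace IsRoundRobin

variable {π : Equiv.Perm (Fin 2)} {a : Fin 2} {s : List (Fin 2)}

theorem head_eq (h : IsRoundRobin π (a :: s)) : a = π 0 :=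
  h 0 (Nat.succ_pos _)

theorem tail (h : IsRoundRobin π (a :: s)) : IsRoundRobin (π * Equiv.swap 0 1) s := by
  intro k hk
  refine (h (k + 1) (Nat.succ_lt_succ hk)).trans (congrArg π ?_)
  rcases Nat.mod_two_eq_zero_or_one k with hk2 | hk2 <;>
    simp [Fin.ext_iff, hk2, Nat.succ_mod_two_eq_one_iff, Nat.succ_mod_two_eq_zero_iff]

end IsRoundRobin

theorem picksOf19_eq_everyOther_drop {O : Type*} : ∀ {π : Equiv.Perm (Fin 2)}
    {seq : List (Fin 2)} {picks : List O}, picks.length = seq.length → IsRoundRobin π seq →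
    ∀ c : Fin 2, picksOf19 seq picks (π c) = everyOther (picks.drop c)
  | _, [], [], _, _, c => by fin_cases c <;> rfl
  | _, a :: s, o :: ps, hlen, hRR, c => by
    have ih := picksOf19_eq_everyOther_drop (Nat.succ_inj.1 hlen) hRR.tail
    obtain rfl := hRR.head_eq
    rw [picksOf19_cons_cons]
    fin_cases c
    · simpa [everyOther_cons] using ih 1
    · simpa using ih 0

theorem seqValid19.picksOf19_roundRobin_le {O : Type*} [DecidableEq O] {u : Fin 2 → O → ℝ}
    {π : Equiv.Perm (Fin 2)} {seq : List (Fin 2)} {picks : List O} {rem : Finset O}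
    (hvalid : seqValid19 u seq picks rem) (hRR : IsRoundRobin π seq) (c d : Fin 2) :
    ∀ s, 1 ≤ s → ∀ hs : s < (picksOf19 seq picks (π d)).length,
      ∃ hs' : s - 1 < (picksOf19 seq picks (π c)).length,
        u (π c) (picksOf19 seq picks (π d))[s] ≤
          u (π c) (picksOf19 seq picks (π c))[s - 1] := by
  have hlen := hvalid.length_eq
  rw [picksOf19_eq_everyOther_drop hlen hRR c, picksOf19_eq_everyOther_drop hlen hRR d]
  intro s hs1 hs
  have hq : d + 2 * s < picks.length := by
    have := length_everyOther (picks.drop d)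
    rw [length_drop] at this
    omega
  refine ⟨by rw [length_everyOther, length_drop]; omega, ?_⟩
  rw [getElem_everyOther, getElem_everyOther, getElem_drop, getElem_drop]
  have hp : c + 2 * (s - 1) < seq.length := by omega
  have key := hvalid.le_pick_of_le hp (by omega) hq (by omega)
  rwa [hRR _ hp, show (⟨(c + 2 * (s - 1)) % 2, Nat.mod_lt _ (by norm_num)⟩ : Fin 2) = c from
    Fin.ext (by rw [Fin.val_mk]; omega)] at key

/-- For a round-robin sequence with two agents and positive utilities: for every `s ≥ 2`
(1-indexed), agent `i`'s `(s-1)`-th pick is weakly preferred by `i` to agent `j`'s `s`-th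
pick; consequently `p(i)` responsively dominates `p(j)` minus `j`'s first pick `t₁`. -/
theorem stmt19 {O : Type*} [Fintype O] [DecidableEq O]
    (u : Fin 2 → O → ℝ)
    (π : Equiv.Perm (Fin 2))
    (seq : List (Fin 2))
    (hRR : ∀ k (hk : k < seq.length),
      seq.get ⟨k, hk⟩ = π ⟨k % 2, Nat.mod_lt _ (by norm_num)⟩)
    (picks : List O) (hvalid : seqValid19 u seq picks Finset.univ) :
    ∀ i j : Fin 2, i ≠ j →
      (∀ s : ℕ, 1 ≤ s → ∀ hs : s < (picksOf19 seq picks j).length,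
        ∃ hs' : s - 1 < (picksOf19 seq picks i).length,
          u i ((picksOf19 seq picks j).get ⟨s, hs⟩) ≤
            u i ((picksOf19 seq picks i).get ⟨s - 1, hs'⟩)) ∧
      (∀ t₁ : O, (picksOf19 seq picks j).head? = some t₁ →
        ∃ f : O → O,
          Set.InjOn f (((picksOf19 seq picks j).toFinset.erase t₁ : Finset O) : Set O) ∧
          ∀ x ∈ (picksOf19 seq picks j).toFinset.erase t₁,
            f x ∈ (picksOf19 seq picks i).toFinset ∧ u i x ≤ u i (f x)) := by
  intro i j _
  obtain ⟨c, rfl⟩ := π.surjective i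
  obtain ⟨d, rfl⟩ := π.surjective j
  have hshift := hvalid.picksOf19_roundRobin_le hRR c d
  have hnodup := (picksOf19_sublist seq picks (π c)).nodup hvalid.nodup
  exact ⟨hshift, fun t₁ => exists_injOn_le_pick_of_le_getElem_pred hnodup hshift⟩
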